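/- arXiv:2006.00050 — 9 statements merged into one kernel-verified Lean document; each statement's English description precedes it below -/
import Mathlib

section
/- Let X be a topological space and (Y, ρ) a metric space. If f : X → Y is a B₁** function (i.e., the restriction of f to the set D_f of its discontinuity points is continuous, whenever D_f is nonempty), then D_f is nowhere dense in X. -/
open Topology ENNReal Filter Set

/-- Oscillation of `f` at `x`: inf over neighbourhoods `O ∋ x` of `sup_{ξ∈O} ρ(f x, f ξ)`. -/
noncomputable def oscAt {X Y : Type*} [TopologicalSpace X] [PseudoMetricSpace Y]
    (f : X → Y) (x : X) : ℝ≥0∞ :=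
  ⨅ O ∈ 𝓝 x, ⨆ ξ ∈ O, edist (f x) (f ξ)

/-- Oscillation at `x` of the restriction of `f` to `D` (computed in the subspace `D`). -/
noncomputable def oscWithinAt {X Y : Type*} [TopologicalSpace X] [PseudoMetricSpace Y]
    (f : X → Y) (D : Set X) (x : X) : ℝ≥0∞ :=
  ⨅ O ∈ 𝓝[D] x, ⨆ ξ ∈ O, edist (f x) (f ξ)

/-- `DEps f ε = {x : ω_f(x) ≥ ε}`. -/
noncomputable def DEps {X : Type*} [TopologicalSpace X] (f : X → ℝ) (ε : ℝ) : Set X :=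
  {x | ENNReal.ofReal ε ≤ oscAt f x}

/-- Iterated ε-oscillation sets: `DIter f ε n = D_f^{n*ε}` (with `DIter f ε 0 = X`). -/
noncomputable def DIter {X : Type*} [TopologicalSpace X] (f : X → ℝ) (ε : ℝ) : ℕ → Set X
  | 0 => Set.univ
  | n + 1 => {x ∈ DIter f ε n | ENNReal.ofReal ε ≤ oscWithinAt f (DIter f ε n) x}

/-- The class `u𝒮_n(X)`. -/
def uS {X : Type*} [TopologicalSpace X] (n : ℕ) (f : X → ℝ) : Prop :=
  ∀ ε : ℝ, 0 < ε → DIter f ε (n + 1) = ∅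

/-- Iterated closed discontinuity sets `D_f^{n*0}` (with `DIter0 f 0 = X`). -/
def DIter0 {X : Type*} [TopologicalSpace X] (f : X → ℝ) : ℕ → Set X
  | 0 => Set.univ
  | n + 1 => closure {x ∈ DIter0 f n | ¬ ContinuousWithinAt f (DIter0 f n) x}

/-- The class `𝒮_n(X)`. -/
def SClass {X : Type*} [TopologicalSpace X] (n : ℕ) (f : X → ℝ) : Prop :=
  DIter0 f (n + 1) = ∅

/-- `f` is `B₁**` : the restriction of `f` to its set of discontinuity points is continuous. -/
def B1ss {X Y : Type*} [TopologicalSpace X] [PseudoMetricSpace Y] (f : X → Y) : Prop :=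
  ∀ x ∈ {x | ¬ ContinuousAt f x}, ContinuousWithinAt f {x | ¬ ContinuousAt f x} x

theorem stmt_0 {X Y : Type*} [TopologicalSpace X] [MetricSpace Y] (f : X → Y)
    (hf : B1ss f) : IsNowhereDense {x | ¬ ContinuousAt f x} := by
  set D := {x | ¬ ContinuousAt f x} with hD
  rw [IsNowhereDense, ← Set.not_nonempty_iff_eq_empty]
  rintro ⟨x, hx⟩
  have hU : IsOpen (interior (closure D)) := isOpen_interior
  have hxcl : x ∈ closure D := interior_subset hx
  obtain ⟨x₀, hx₀U, hx₀D⟩ :=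
    mem_closure_iff.mp hxcl (interior (closure D)) hU hx
  have hx₀D' : ¬ ContinuousAt f x₀ := hx₀D
  have hεex : ∃ ε > 0, ¬ ∀ᶠ y in 𝓝 x₀, dist (f y) (f x₀) < ε := by
    by_contra hc
    push_neg at hc
    exact hx₀D' (Metric.tendsto_nhds.mpr hc)
  obtain ⟨ε, hε, hεne⟩ := hεex
  have hcw : ContinuousWithinAt f D x₀ := hf x₀ hx₀D
  have h4 : f ⁻¹' Metric.ball (f x₀) (ε / 4) ∈ 𝓝[D] x₀ :=
    hcw (Metric.ball_mem_nhds _ (by positivity))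
  obtain ⟨V, hVopen, hx₀V, hV⟩ := mem_nhdsWithin.mp h4
  set W := interior (closure D) ∩ V with hWdef
  have hWopen : IsOpen W := hU.inter hVopen
  have hx₀W : x₀ ∈ W := ⟨hx₀U, hx₀V⟩
  have key : ∀ y ∈ W, dist (f y) (f x₀) ≤ ε / 4 := by
    intro y hy
    by_cases hyD : y ∈ D
    · have : f y ∈ Metric.ball (f x₀) (ε / 4) := hV ⟨hy.2, hyD⟩
      exact le_of_lt (Metric.mem_ball.mp this)
    · have hyc : ContinuousAt f y := not_not.mp hyD
      have hycl : y ∈ closure (W ∩ D) := by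
        apply hWopen.inter_closure
        exact ⟨hy, interior_subset hy.1⟩
      have hne : (𝓝[W ∩ D] y).NeBot := mem_closure_iff_nhdsWithin_neBot.mp hycl
      have htend : Tendsto (fun z => dist (f z) (f x₀)) (𝓝[W ∩ D] y)
          (𝓝 (dist (f y) (f x₀))) :=
        ((hyc.dist continuousAt_const).mono_left nhdsWithin_le_nhds)
      refine le_of_tendsto htend ?_
      filter_upwards [self_mem_nhdsWithin] with z hz
      exact le_of_lt (Metric.mem_ball.mp (hV ⟨hz.1.2, hz.2⟩))
  apply hεne
  filter_upwards [hWopen.mem_nhds hx₀W] with y hy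
  have := key y hy
  linarith
end

section
/- Let X be a topological space and (Y, ρ) a metric space. Suppose a sequence of functions f_n : X → Y converges uniformly to f : X → Y, and every f_n is B₁** (its restriction to its set of discontinuity points is continuous). Then for every ε > 0, the restriction of f to the set D_f^ε = {x ∈ X : ω_f(x) ≥ ε} is continuous. -/
open Topology ENNReal Filter Set

theorem stmt_3 {X Y : Type*} [TopologicalSpace X] [MetricSpace Y]
    (F : ℕ → X → Y) (f : X → Y) (hB : ∀ n, B1ss (F n))
    (hu : TendstoUniformly F f atTop) (ε : ℝ) (hε : 0 < ε) :
    ∀ x ∈ {x | ENNReal.ofReal ε ≤ oscAt f x},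
      ContinuousWithinAt f {x | ENNReal.ofReal ε ≤ oscAt f x} x := by
  intro x hx
  have key : ∀ n, (∀ ξ, dist (f ξ) (F n ξ) < ε/4) →
      ∀ y, ENNReal.ofReal ε ≤ oscAt f y → ¬ ContinuousAt (F n) y := by
    intro n hn y hy hc
    have h1 : ∀ᶠ ξ in 𝓝 y, dist (F n ξ) (F n y) < ε/4 :=
      Metric.tendsto_nhds.1 hc (ε/4) (by linarith)
    obtain ⟨O, hO, hOs⟩ := h1.exists_mem
    have hb : oscAt f y ≤ ENNReal.ofReal (3*ε/4) := by
      refine le_trans (iInf₂_le O hO) ?_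
      refine iSup₂_le fun ξ hξ => ?_
      rw [edist_dist]
      apply ENNReal.ofReal_le_ofReal
      have h2 := hn ξ
      have h3 := hn y
      have h4 := hOs ξ hξ
      have := dist_triangle4 (f y) (F n y) (F n ξ) (f ξ)
      have e1 : dist (F n ξ) (F n y) = dist (F n y) (F n ξ) := dist_comm _ _
      have e2 : dist (f ξ) (F n ξ) = dist (F n ξ) (f ξ) := dist_comm _ _
      linarith
    have : ENNReal.ofReal (3*ε/4) < ENNReal.ofReal ε :=
      (ENNReal.ofReal_lt_ofReal_iff hε).2 (by linarith)
    exact absurd this (not_lt.2 (hy.trans hb))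
  rw [ContinuousWithinAt, Metric.tendsto_nhds]
  intro ε' hε'
  obtain ⟨n, hn⟩ := (Metric.tendstoUniformly_iff.1 hu (min (ε/4) (ε'/4))
    (lt_min (by linarith) (by linarith))).exists
  have hnε : ∀ ξ, dist (f ξ) (F n ξ) < ε/4 := fun ξ => (hn ξ).trans_le (min_le_left _ _)
  have hnε' : ∀ ξ, dist (f ξ) (F n ξ) < ε'/4 := fun ξ => (hn ξ).trans_le (min_le_right _ _)
  have hsub : {y | ENNReal.ofReal ε ≤ oscAt f y} ⊆ {y | ¬ ContinuousAt (F n) y} :=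
    fun y hy => key n hnε y hy
  have hc : ContinuousWithinAt (F n) {y | ENNReal.ofReal ε ≤ oscAt f y} x :=
    (hB n x (hsub hx)).mono hsub
  have h2 : ∀ᶠ ξ in 𝓝[{y | ENNReal.ofReal ε ≤ oscAt f y}] x,
      dist (F n ξ) (F n x) < ε'/4 := Metric.tendsto_nhds.1 hc (ε'/4) (by linarith)
  filter_upwards [h2] with ξ hξ
  have h3 := hnε' ξ
  have h4 := hnε' x
  have := dist_triangle4 (f ξ) (F n ξ) (F n x) (f x)
  have e1 : dist (f ξ) (F n ξ) = dist (F n ξ) (f ξ) := dist_comm _ _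
  have e2 : dist (F n x) (f x) = dist (f x) (F n x) := dist_comm _ _
  linarith
end

section
/- Let X be a T₅ (hereditarily normal, T₁) topological space and f : X → ℝ a function such that for every ε > 0 the restriction of f to D_f^ε = {x : ω_f(x) ≥ ε} is continuous. Then for every ε > 0 there exists a function g : X → ℝ such that sup_{x∈X} |f(x) − g(x)| ≤ ε and g is B₁**, i.e., the restriction of g to its set of discontinuity points is continuous. -/
open Topology ENNReal Filter Set

/-!
Let `U` be the set where the oscillation of `f` is `< ε`. It is open, hence normal, and near each
of its points `f` varies by less than `ε`, so for every `k : ℤ` the closures in `U` of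
`{f ≤ k ε}` and `{f ≥ (k + 1) ε}` are disjoint. Summing the Urysohn functions of these pairs gives
a continuous staircase `g₀` on `U` within `ε` of `f`. Take `g = g₀` on `U` and `g = f` off `U`: the
discontinuities of `g` lie in `Uᶜ ⊆ D_f^{ε/2}`, on which `g = f` is continuous by hypothesis.
-/

lemma isOpen_setOf_oscillation_lt {E F : Type*} [TopologicalSpace E] [PseudoEMetricSpace F]
    (f : E → F) (c : ℝ≥0∞) : IsOpen {x | oscillation f x < c} := by
  refine isOpen_iff_mem_nhds.2 fun x hx => ?_
  obtain ⟨S, hS, hSc⟩ : ∃ S ∈ (𝓝 x).map f, Metric.ediam S < c := by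
    change oscillation f x < c at hx
    simpa only [oscillation, iInf_lt_iff, exists_prop] using hx
  filter_upwards [eventually_eventually_nhds.2 hS] with y hy
  exact (biInf_le Metric.ediam (show S ∈ (𝓝 y).map f from hy)).trans_lt hSc

lemma exists_mem_nhds_abs_sub_lt_of_oscillation_lt {X : Type*} [TopologicalSpace X] {f : X → ℝ}
    {x : X} {δ : ℝ} (h : oscillation f x < ENNReal.ofReal δ) :
    ∃ O ∈ 𝓝 x, ∀ y ∈ O, ∀ z ∈ O, |f y - f z| < δ := by
  obtain ⟨S, hS, hSδ⟩ : ∃ S ∈ (𝓝 x).map f, Metric.ediam S < ENNReal.ofReal δ := by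
    simpa only [oscillation, iInf_lt_iff, exists_prop] using h
  refine ⟨f ⁻¹' S, hS, fun y hy z hz => ?_⟩
  rw [← Real.dist_eq, ← edist_lt_ofReal]
  exact (Metric.edist_le_ediam_of_mem (show f y ∈ S from hy) hz).trans_lt hSδ

lemma oscillation_le_two_mul_oscAt {X Y : Type*} [TopologicalSpace X] [PseudoMetricSpace Y]
    (f : X → Y) (x : X) : oscillation f x ≤ 2 * oscAt f x := by
  calc oscillation f x ≤ ⨅ O ∈ 𝓝 x, 2 * ⨆ ξ ∈ O, edist (f x) (f ξ) := by
        refine le_iInf₂ fun O hO => ?_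
        have hsub : f '' O ⊆ Metric.closedEBall (f x) (⨆ ξ ∈ O, edist (f x) (f ξ)) := by
          rintro _ ⟨ξ, hξ, rfl⟩
          rw [Metric.mem_closedEBall, edist_comm]
          exact le_iSup₂ (f := fun ξ _ => edist (f x) (f ξ)) ξ hξ
        calc oscillation f x ≤ Metric.ediam (f '' O) := biInf_le _ (image_mem_map hO)
          _ ≤ _ := (Metric.ediam_mono hsub).trans Metric.ediam_closedEBall_le
    _ = 2 * oscAt f x := by
        simp only [oscAt, ENNReal.mul_iInf_of_ne two_ne_zero ofNat_ne_top]

lemma ofReal_half_le_oscAt {X Y : Type*} [TopologicalSpace X] [PseudoMetricSpace Y] {f : X → Y}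
    {x : X} {ε : ℝ}
    (h : ENNReal.ofReal ε ≤ oscillation f x) : ENNReal.ofReal (ε / 2) ≤ oscAt f x := by
  rw [ENNReal.ofReal_div_of_pos two_pos, ENNReal.ofReal_ofNat]
  exact ENNReal.div_le_of_le_mul' (h.trans (oscillation_le_two_mul_oscAt f x))

lemma Int.sum_Ico_ite_lt {a b m : ℤ} (ham : a ≤ m) (hmb : m ≤ b) :
    ∑ k ∈ Finset.Ico a b, (if k < m then (1 : ℝ) else 0) = m - a := by
  rw [Finset.sum_boole, Finset.Ico_filter_lt, min_eq_right hmb, Int.card_Ico]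
  exact_mod_cast Int.toNat_of_nonneg (sub_nonneg.2 ham)

section UrysohnLadder

variable {Z : Type*} {F : Z → ℝ} {δ : ℝ} {φ : ℤ → Z → ℝ}

structure IsUrysohnLadder (F : Z → ℝ) (δ : ℝ) (φ : ℤ → Z → ℝ) : Prop where
  mem_Icc : ∀ (k : ℤ) x, φ k x ∈ Icc (0 : ℝ) 1
  eq_zero : ∀ (k : ℤ) x, F x ≤ k * δ → φ k x = 0
  eq_one : ∀ (k : ℤ) x, (k + 1) * δ ≤ F x → φ k x = 1

-- Shifting the negative rungs down by `1` makes the terms vanish for `|k|` large.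
def ladderTerm (φ : ℤ → Z → ℝ) (k : ℤ) (x : Z) : ℝ := φ k x - if k < 0 then 1 else 0

lemma IsUrysohnLadder.mem_Ico_of_ladderTerm_ne_zero (hφ : IsUrysohnLadder F δ φ) (hδ : 0 < δ)
    {k : ℤ} {x : Z} {N : ℕ} (hk : ladderTerm φ k x ≠ 0) (hx : |F x| < N * δ) :
    k ∈ Finset.Ico (-(N : ℤ)) N := by
  have hFx := abs_lt.1 hx
  rw [Finset.mem_Ico]
  unfold ladderTerm at hk
  split_ifs at hk with hneg
  · have hlt : F x < (k + 1) * δ := lt_of_not_ge fun h => hk (by rw [hφ.eq_one k x h]; ring)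
    have : (-(N : ℝ)) < k + 1 := lt_of_mul_lt_mul_right (by linarith) hδ.le
    have : -(N : ℤ) < k + 1 := by exact_mod_cast this
    omega
  · have hlt : k * δ < F x := lt_of_not_ge fun h => hk (by rw [hφ.eq_zero k x h]; ring)
    have : (k : ℝ) < N := lt_of_mul_lt_mul_right (by linarith) hδ.le
    have : k < (N : ℤ) := by exact_mod_cast this
    omega

lemma IsUrysohnLadder.abs_sub_finsum_le (hφ : IsUrysohnLadder F δ φ) (hδ : 0 < δ) (x : Z) :
    |F x - δ * ∑ᶠ k, ladderTerm φ k x| ≤ δ := by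
  obtain ⟨N, hN⟩ : ∃ N : ℕ, |F x| < N * δ := by
    obtain ⟨N, hN⟩ := exists_nat_gt (|F x| / δ)
    exact ⟨N, (div_lt_iff₀ hδ).1 hN⟩
  set m := ⌊F x / δ⌋
  have hmF : m * δ ≤ F x := (le_div_iff₀ hδ).1 (Int.floor_le _)
  have hFm : F x < (m + 1) * δ := (div_lt_iff₀ hδ).1 (Int.lt_floor_add_one _)
  have hFx := abs_lt.1 hN
  have hNm : -(N : ℤ) ≤ m ∧ m + 1 ≤ N := by
    have h₁ : (-(N : ℝ)) < m + 1 := lt_of_mul_lt_mul_right (by linarith) hδ.le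
    have h₂ : (m : ℝ) < N := lt_of_mul_lt_mul_right (by linarith) hδ.le
    have h₁' : -(N : ℤ) < m + 1 := by exact_mod_cast h₁
    have h₂' : m < (N : ℤ) := by exact_mod_cast h₂
    omega
  rw [finsum_eq_sum_of_support_subset (s := Finset.Ico (-(N : ℤ)) N) _
    fun k hk => hφ.mem_Ico_of_ladderTerm_ne_zero hδ hk hN]
  have hlow : ∀ k : ℤ, (if k < m then 1 else 0) ≤ φ k x := by
    intro k
    split_ifs with hk
    · refine (hφ.eq_one k x ?_).ge
      have : (k : ℝ) + 1 ≤ m := by exact_mod_cast hk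
      nlinarith
    · exact (hφ.mem_Icc k x).1
  have hup : ∀ k : ℤ, φ k x ≤ if k < m + 1 then 1 else 0 := by
    intro k
    split_ifs with hk
    · exact (hφ.mem_Icc k x).2
    · refine (hφ.eq_zero k x ?_).le
      have : (m : ℝ) + 1 ≤ k := by exact_mod_cast not_lt.1 hk
      nlinarith
  have hsum_ge : (m : ℝ) ≤ ∑ k ∈ Finset.Ico (-(N : ℤ)) N, ladderTerm φ k x :=
    calc (m : ℝ) = ∑ k ∈ Finset.Ico (-(N : ℤ)) N,
          ((if k < m then 1 else 0) - if k < 0 then 1 else 0) := by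
          rw [Finset.sum_sub_distrib, Int.sum_Ico_ite_lt hNm.1 (by omega),
            Int.sum_Ico_ite_lt (by omega) (by omega)]
          ring
      _ ≤ _ := Finset.sum_le_sum fun k _ => sub_le_sub_right (hlow k) _
  have hsum_le : ∑ k ∈ Finset.Ico (-(N : ℤ)) N, ladderTerm φ k x ≤ m + 1 :=
    calc _ ≤ ∑ k ∈ Finset.Ico (-(N : ℤ)) N,
          ((if k < m + 1 then 1 else 0) - if k < 0 then 1 else 0) :=
          Finset.sum_le_sum fun k _ => sub_le_sub_right (hup k) _
      _ = m + 1 := by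
          rw [Finset.sum_sub_distrib, Int.sum_Ico_ite_lt (by omega) hNm.2,
            Int.sum_Ico_ite_lt (by omega) (by omega)]
          push_cast
          ring
  rw [abs_le]
  constructor <;> nlinarith

lemma IsUrysohnLadder.locallyFinite [TopologicalSpace Z] (hφ : IsUrysohnLadder F δ φ)
    (hδ : 0 < δ) (hF : ∀ x, ∃ O ∈ 𝓝 x, ∃ C, ∀ y ∈ O, |F y| ≤ C) :
    LocallyFinite fun k => Function.support (ladderTerm φ k) := by
  intro x
  obtain ⟨O, hO, C, hC⟩ := hF x
  obtain ⟨N, hN⟩ := exists_nat_gt (C / δ)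
  refine ⟨O, hO, (Finset.Ico (-(N : ℤ)) N).finite_toSet.subset ?_⟩
  rintro k ⟨y, hky, hyO⟩
  exact hφ.mem_Ico_of_ladderTerm_ne_zero hδ hky ((hC y hyO).trans_lt ((div_lt_iff₀ hδ).1 hN))

lemma IsUrysohnLadder.continuous_finsum [TopologicalSpace Z] (hφ : IsUrysohnLadder F δ φ)
    (hδ : 0 < δ) (hF : ∀ x, ∃ O ∈ 𝓝 x, ∃ C, ∀ y ∈ O, |F y| ≤ C) (hc : ∀ k, Continuous (φ k)) :
    Continuous fun x => ∑ᶠ k, ladderTerm φ k x :=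
  _root_.continuous_finsum (fun k => (hc k).sub continuous_const) (hφ.locallyFinite hδ hF)

end UrysohnLadder

section Approximation

variable {Z : Type*} [TopologicalSpace Z] {F : Z → ℝ} {δ : ℝ}

lemma disjoint_closure_setOf_le_setOf_add_le
    (hF : ∀ x, ∃ O ∈ 𝓝 x, ∀ y ∈ O, ∀ z ∈ O, |F y - F z| < δ) (a : ℝ) :
    Disjoint (closure {x | F x ≤ a}) (closure {x | a + δ ≤ F x}) := by
  refine Set.disjoint_left.2 fun x hxa hxb => ?_
  obtain ⟨O, hO, hOF⟩ := hF x
  obtain ⟨z, hzO, hz⟩ := mem_closure_iff_nhds.1 hxa O hO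
  obtain ⟨y, hyO, hy⟩ := mem_closure_iff_nhds.1 hxb O hO
  have := (abs_lt.1 (hOF y hyO z hzO)).2
  simp only [mem_ofPred_eq] at hy hz
  linarith

lemma exists_isUrysohnLadder [NormalSpace Z]
    (hF : ∀ x, ∃ O ∈ 𝓝 x, ∀ y ∈ O, ∀ z ∈ O, |F y - F z| < δ) :
    ∃ φ : ℤ → C(Z, ℝ), IsUrysohnLadder F δ fun k => φ k := by
  choose φ hφ₀ hφ₁ hφ using fun k : ℤ =>
    exists_continuous_zero_one_of_isClosed isClosed_closure isClosed_closure
      (disjoint_closure_setOf_le_setOf_add_le hF (k * δ))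
  refine ⟨φ, hφ, fun k x hx => hφ₀ k (subset_closure hx), fun k x hx => hφ₁ k (subset_closure ?_)⟩
  simpa only [mem_ofPred_eq, add_mul, one_mul] using hx

theorem exists_continuous_abs_sub_le [NormalSpace Z] (hδ : 0 < δ)
    (hF : ∀ x, ∃ O ∈ 𝓝 x, ∀ y ∈ O, ∀ z ∈ O, |F y - F z| < δ) :
    ∃ g : Z → ℝ, Continuous g ∧ ∀ x, |F x - g x| ≤ δ := by
  obtain ⟨φ, hφ⟩ := exists_isUrysohnLadder hF
  have hbdd : ∀ x, ∃ O ∈ 𝓝 x, ∃ C, ∀ y ∈ O, |F y| ≤ C := fun x => by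
    obtain ⟨O, hO, hOF⟩ := hF x
    refine ⟨O, hO, |F x| + δ, fun y hy => ?_⟩
    have := hOF y hy x (mem_of_mem_nhds hO)
    linarith [abs_sub_abs_le_abs_sub (F y) (F x)]
  exact ⟨fun x => δ * ∑ᶠ k, ladderTerm (fun k => φ k) k x,
    continuous_const.mul (hφ.continuous_finsum hδ hbdd fun k => (φ k).continuous),
    hφ.abs_sub_finsum_le hδ⟩

end Approximation

lemma b1ss_of_continuousOn_of_eqOn_compl {X Y : Type*} [TopologicalSpace X]
    [PseudoMetricSpace Y] {f g : X → Y} {U : Set X} (hU : IsOpen U) (hg : ContinuousOn g U)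
    (hgf : EqOn g f Uᶜ) (hf : ∀ x ∈ Uᶜ, ContinuousWithinAt f Uᶜ x) : B1ss g := by
  have hsub : {x | ¬ ContinuousAt g x} ⊆ Uᶜ := fun x hx hxU =>
    hx (hg.continuousAt (hU.mem_nhds hxU))
  intro x hx
  exact ((hf x (hsub hx)).congr hgf (hgf (hsub hx))).mono hsub

theorem stmt_5 {X : Type*} [TopologicalSpace X] [T5Space X] (f : X → ℝ)
    (hstar : ∀ ε : ℝ, 0 < ε → ∀ x ∈ DEps f ε, ContinuousWithinAt f (DEps f ε) x)
    (ε : ℝ) (hε : 0 < ε) :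
    ∃ g : X → ℝ, (∀ x, |f x - g x| ≤ ε) ∧ B1ss g := by
  set U := {x | oscillation f x < ENNReal.ofReal ε}
  obtain ⟨g₀, hg₀, hfg₀⟩ := exists_continuous_abs_sub_le (F := fun x : U => f x) hε fun x => by
    obtain ⟨O, hO, hOf⟩ := exists_mem_nhds_abs_sub_lt_of_oscillation_lt x.2
    exact ⟨_, continuous_subtype_val.continuousAt.preimage_mem_nhds hO,
      fun y hy z hz => hOf y hy z hz⟩
  let g x := if h : x ∈ U then g₀ ⟨x, h⟩ else f x
  have hgU : ContinuousOn g U := by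
    rw [continuousOn_iff_continuous_domRestrict]
    convert hg₀ using 1
    funext x
    exact dif_pos x.2
  have hgf : EqOn g f Uᶜ := fun x hx => dif_neg hx
  refine ⟨g, fun x => ?_, b1ss_of_continuousOn_of_eqOn_compl
    (isOpen_setOf_oscillation_lt f _) hgU hgf fun x hx => ?_⟩
  · by_cases hx : x ∈ U
    · simpa [g, hx] using hfg₀ ⟨x, hx⟩
    · simpa [g, hx] using hε.le
  · have hsub : Uᶜ ⊆ DEps f (ε / 2) := fun y hy => ofReal_half_le_oscAt (not_lt.1 hy)
    exact (hstar (ε / 2) (half_pos hε) x (hsub hx)).mono hsub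
end

section
/- Let X be a T₅ topological space and f : X → ℝ. Then f is the uniform limit of a sequence of B₁** functions X → ℝ if and only if for every ε > 0 the restriction of f to the set D_f^ε = {x : ω_f(x) ≥ ε} is continuous. -/
open Topology ENNReal Filter Set

/-!
If `F n → f` uniformly and `|F n - f| < ε / 4`, every point of `D_f^ε` is a discontinuity point
of `F n`, so the `B₁**` function `F n` is continuous on `D_f^ε`, and so is the uniform limit `f`.

Conversely, `f` has oscillation `< ε` off the closed set `T = closure D_f^ε ⊆ D_f^{ε/2}`. On the
normal subspace `Tᶜ` such a function is `4ε`-close to a continuous one: a locally finite sum of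
Urysohn functions separating the level sets `{f ≤ kε}` and `{f ≥ (k + 2)ε}`, applied to `f⁺` and
`f⁻`. Gluing it with `f` on `T` gives a `B₁**` function, since its discontinuities lie in `T`,
where it agrees with the continuous `f|T`.
-/

section Oscillation

variable {X : Type*} [TopologicalSpace X] {f : X → ℝ} {x : X} {ε : ℝ}

lemma oscAt_le_of_eventually {c : ℝ≥0∞} (h : ∀ᶠ ξ in 𝓝 x, edist (f x) (f ξ) ≤ c) :
    oscAt f x ≤ c :=
  iInf₂_le_of_le _ h (iSup₂_le fun _ => id)

lemma eventually_dist_lt_of_oscAt_lt (hε : 0 < ε) (h : oscAt f x < ENNReal.ofReal ε) :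
    ∀ᶠ ξ in 𝓝 x, dist (f ξ) (f x) < ε := by
  simp only [oscAt, iInf_lt_iff, exists_prop] at h
  obtain ⟨O, hO, hlt⟩ := h
  filter_upwards [hO] with ξ hξ
  rw [dist_comm, ← ENNReal.ofReal_lt_ofReal_iff hε, ← edist_dist]
  exact (le_iSup₂ (f := fun ξ _ => edist (f x) (f ξ)) ξ hξ).trans_lt hlt

lemma closure_DEps_subset : closure (DEps f ε) ⊆ DEps f (ε / 2) := by
  intro x hx
  refine le_iInf₂ (f := fun O _ => ⨆ ξ ∈ O, edist (f x) (f ξ)) fun O hO => ?_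
  set M := ⨆ ξ ∈ O, edist (f x) (f ξ)
  obtain ⟨y, hyO, hy⟩ : (interior O ∩ DEps f ε).Nonempty :=
    mem_closure_iff.mp hx _ isOpen_interior (mem_interior_iff_mem_nhds.mpr hO)
  have hM : ∀ ξ ∈ O, edist (f x) (f ξ) ≤ M := fun ξ hξ =>
    le_iSup₂ (f := fun ξ _ => edist (f x) (f ξ)) ξ hξ
  -- the oscillation at `y` is witnessed inside `O`, and each witness is within `2 M` via `f x`
  have h2M : ENNReal.ofReal ε ≤ 2 * M := by
    refine hy.trans (iInf₂_le_of_le _ (isOpen_interior.mem_nhds hyO) (iSup₂_le fun ξ hξ => ?_))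
    calc edist (f y) (f ξ) ≤ edist (f x) (f y) + edist (f x) (f ξ) := edist_triangle_left _ _ _
      _ ≤ M + M := add_le_add (hM y (interior_subset hyO)) (hM ξ (interior_subset hξ))
      _ = 2 * M := (two_mul M).symm
  rw [ENNReal.ofReal_div_of_pos two_pos, ENNReal.ofReal_ofNat]
  exact ENNReal.div_le_of_le_mul' h2M

lemma DEps_subset_setOf_not_continuousAt (hε : 0 < ε) {F : X → ℝ}
    (hF : ∀ y, dist (f y) (F y) < ε / 4) : DEps f ε ⊆ {y | ¬ ContinuousAt F y} := by
  intro y hy hFy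
  have hosc : oscAt f y ≤ ENNReal.ofReal (3 * (ε / 4)) := by
    refine oscAt_le_of_eventually ?_
    filter_upwards [Metric.tendsto_nhds.mp hFy (ε / 4) (by positivity)] with ξ hξ
    rw [edist_dist]
    refine ENNReal.ofReal_le_ofReal ?_
    linarith [dist_triangle4 (f y) (F y) (F ξ) (f ξ), hF y, hF ξ, dist_comm (F ξ) (F y),
      dist_comm (f ξ) (F ξ)]
  have := hy.trans hosc
  rw [ENNReal.ofReal_le_ofReal_iff (by positivity)] at this
  linarith

end Oscillation

lemma abs_mul_finsum_sub_le {a : ℕ → ℝ} {t ε : ℝ} (hε : 0 < ε) (ht : 0 ≤ t)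
    (ha : ∀ k, a k ∈ Icc (0 : ℝ) 1) (ha0 : ∀ k : ℕ, t ≤ k * ε → a k = 0)
    (ha1 : ∀ k : ℕ, (k + 2) * ε ≤ t → a k = 1) :
    |ε * ∑ᶠ k, a k - t| ≤ 2 * ε := by
  set n := ⌊t / ε⌋₊
  have hn : n * ε ≤ t ∧ t < (n + 1) * ε := by
    rw [← le_div_iff₀ hε, ← div_lt_iff₀ hε]
    exact ⟨Nat.floor_le (by positivity), Nat.lt_floor_add_one _⟩
  have hsum : ∑ᶠ k, a k = ∑ k ∈ Finset.range (n + 1), a k := by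
    refine finsum_eq_sum_of_support_subset a fun k hk => ?_
    rw [Finset.coe_range, mem_Iio]
    by_contra! hkn
    refine hk (ha0 k (hn.2.le.trans ?_))
    gcongr
    exact_mod_cast hkn
  have hupper : ∑ k ∈ Finset.range (n + 1), a k ≤ n + 1 := by
    simpa using Finset.sum_le_card_nsmul (Finset.range (n + 1)) a 1 fun k _ => (ha k).2
  have hlower : (n : ℝ) - 1 ≤ ∑ k ∈ Finset.range (n + 1), a k :=
    calc (n : ℝ) - 1 ≤ ((n - 1 : ℕ) : ℝ) := by
          have : (n : ℝ) ≤ ((n - 1 : ℕ) : ℝ) + 1 := by exact_mod_cast (by omega : n ≤ n - 1 + 1)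
          linarith
      _ = ∑ k ∈ Finset.range (n - 1), a k := by
          rw [Finset.sum_congr rfl fun k hk => ha1 k ?_]
          · simp
          refine le_trans ?_ hn.1
          gcongr
          have := Finset.mem_range.mp hk
          exact_mod_cast (by omega : k + 2 ≤ n)
      _ ≤ ∑ k ∈ Finset.range (n + 1), a k :=
          Finset.sum_le_sum_of_subset_of_nonneg (Finset.range_subset_range.mpr (by omega))
            fun k _ _ => (ha k).1
  rw [hsum, abs_le]
  constructor <;> nlinarith

section Staircase

variable {Y : Type*} [TopologicalSpace Y] {f : Y → ℝ} {ε : ℝ}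

lemma closure_preimage_subset_of_eventually_dist_lt
    (hf : ∀ y, ∀ᶠ ξ in 𝓝 y, dist (f ξ) (f y) < ε) (s : Set ℝ) :
    closure (f ⁻¹' s) ⊆ {y | ∃ t ∈ s, dist t (f y) < ε} := fun y hy =>
  let ⟨ξ, hξs, hξ⟩ := ((mem_closure_iff_frequently.mp hy).and_eventually (hf y)).exists
  ⟨f ξ, hξs, hξ⟩

lemma exists_continuous_staircase [NormalSpace Y]
    (hf : ∀ y, ∀ᶠ ξ in 𝓝 y, dist (f ξ) (f y) < ε) (k : ℕ) :
    ∃ φ : C(Y, ℝ), (∀ y, φ y ∈ Icc (0 : ℝ) 1) ∧ (∀ y, f y ≤ k * ε → φ y = 0) ∧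
      ∀ y, (k + 2) * ε ≤ f y → φ y = 1 := by
  have hdisj : Disjoint (closure (f ⁻¹' Iic (k * ε))) (closure (f ⁻¹' Ici ((k + 2) * ε))) := by
    refine Set.disjoint_left.mpr fun y hy hy' => ?_
    obtain ⟨t, ht, hty⟩ := closure_preimage_subset_of_eventually_dist_lt hf _ hy
    obtain ⟨t', ht', hty'⟩ := closure_preimage_subset_of_eventually_dist_lt hf _ hy'
    rw [Real.dist_eq, abs_lt] at hty hty'
    simp only [mem_Iic, mem_Ici] at ht ht'
    linarith
  obtain ⟨φ, hφ0, hφ1, hφ⟩ :=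
    exists_continuous_zero_one_of_isClosed isClosed_closure isClosed_closure hdisj
  exact ⟨φ, hφ, fun y hy => hφ0 (subset_closure hy), fun y hy => hφ1 (subset_closure hy)⟩

lemma exists_continuous_abs_sub_max_zero_le [NormalSpace Y] (hε : 0 < ε)
    (hf : ∀ y, ∀ᶠ ξ in 𝓝 y, dist (f ξ) (f y) < ε) :
    ∃ h : Y → ℝ, Continuous h ∧ ∀ y, |h y - max (f y) 0| ≤ 2 * ε := by
  choose φ hφ hφ0 hφ1 using exists_continuous_staircase hf
  have hlf : LocallyFinite fun k => Function.support (φ k) := by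
    intro y
    refine ⟨_, hf y, (finite_Iio ⌈(f y + ε) / ε⌉₊).subset fun k ⟨ξ, hξk, hξy⟩ => ?_⟩
    rw [mem_Iio, Nat.lt_ceil, lt_div_iff₀ hε]
    by_contra! hk
    have hξy : |f ξ - f y| < ε := hξy
    rw [abs_lt] at hξy
    exact hξk (hφ0 k ξ (by linarith))
  refine ⟨fun y => ε * ∑ᶠ k, φ k y,
    continuous_const.mul (continuous_finsum (fun k => (φ k).continuous) hlf), fun y => ?_⟩
  refine abs_mul_finsum_sub_le hε (le_max_right _ _) (fun k => hφ k y)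
    (fun k hk => hφ0 k y (le_of_max_le_left hk)) fun k hk => hφ1 k y ?_
  exact (le_max_iff.mp hk).resolve_right (not_le.mpr (by positivity))

lemma exists_continuous_dist_le [NormalSpace Y] (hε : 0 < ε)
    (hf : ∀ y, ∀ᶠ ξ in 𝓝 y, dist (f ξ) (f y) < ε) :
    ∃ h : Y → ℝ, Continuous h ∧ ∀ y, dist (h y) (f y) ≤ 4 * ε := by
  obtain ⟨h₁, hc₁, hh₁⟩ := exists_continuous_abs_sub_max_zero_le hε hf
  obtain ⟨h₂, hc₂, hh₂⟩ := exists_continuous_abs_sub_max_zero_le (f := fun y => -f y) hε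
    (by simpa only [dist_neg_neg] using hf)
  refine ⟨h₁ - h₂, hc₁.sub hc₂, fun y => ?_⟩
  calc dist (h₁ y - h₂ y) (f y)
      = |(h₁ y - max (f y) 0) - (h₂ y - max (-f y) 0)| := by
        rw [Real.dist_eq]
        congr 1
        linarith [max_zero_sub_max_neg_zero_eq_self (f y)]
    _ ≤ 4 * ε := by linarith [abs_sub (h₁ y - max (f y) 0) (h₂ y - max (-f y) 0), hh₁ y, hh₂ y]

end Staircase

lemma B1ss.continuousOn_of_subset {X Y : Type*} [TopologicalSpace X] [PseudoMetricSpace Y]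
    {F : X → Y} (hF : B1ss F) {s : Set X} (hs : s ⊆ {x | ¬ ContinuousAt F x}) :
    ContinuousOn F s :=
  fun x hx => (hF x (hs hx)).mono hs

lemma B1ss_piecewise {X Y : Type*} [TopologicalSpace X] [PseudoMetricSpace Y] {f g : X → Y}
    {T : Set X} [∀ x, Decidable (x ∈ T)] (hT : IsClosed T) (hf : ContinuousOn f T)
    (hg : ContinuousOn g Tᶜ) : B1ss (T.piecewise f g) := by
  have hD : {x | ¬ ContinuousAt (T.piecewise f g) x} ⊆ T := fun x hx => by_contra fun hxT =>
    hx ((hg.congr fun y hy => T.piecewise_eq_of_notMem f g hy).continuousAt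
      (hT.isOpen_compl.mem_nhds hxT))
  exact fun x hx => ((hf.congr fun y hy => T.piecewise_eq_of_mem f g hy) x (hD hx)).mono hD

lemma exists_B1ss_dist_le {X : Type*} [TopologicalSpace X] [T5Space X] {f : X → ℝ} {ε : ℝ}
    (hε : 0 < ε) (hf : ContinuousOn f (DEps f (ε / 2))) :
    ∃ g : X → ℝ, B1ss g ∧ ∀ x, dist (g x) (f x) ≤ 4 * ε := by
  classical
  set T := closure (DEps f ε)
  have hoscU : ∀ u, ∀ᶠ ξ in 𝓝 u, dist (Tᶜ.domRestrict f ξ) (Tᶜ.domRestrict f u) < ε := fun u =>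
    (continuous_subtype_val.tendsto u).eventually <| eventually_dist_lt_of_oscAt_lt hε <|
      not_le.mp fun h => u.2 (subset_closure h)
  obtain ⟨h, hc, hh⟩ := exists_continuous_dist_le hε hoscU
  set h' : X → ℝ := Function.extend Subtype.val h 0
  have hh' : ∀ u : (Tᶜ : Set X), h' u = h u := Subtype.val_injective.extend_apply h 0
  refine ⟨T.piecewise f h', B1ss_piecewise isClosed_closure
    (hf.mono closure_DEps_subset) ?_, fun x => ?_⟩
  · rw [continuousOn_iff_continuous_domRestrict]
    convert hc using 1
    exact funext hh'
  · by_cases hx : x ∈ T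
    · simp [hx, hε.le]
    · simpa [hx, hh' ⟨x, hx⟩] using hh ⟨x, hx⟩

lemma exists_tendstoUniformly_of_forall_exists_dist_le {X β : Type*} [PseudoMetricSpace β]
    {f : X → β} {P : (X → β) → Prop} (h : ∀ δ > 0, ∃ g, P g ∧ ∀ x, dist (g x) (f x) ≤ δ) :
    ∃ F : ℕ → X → β, (∀ n, P (F n)) ∧ TendstoUniformly F f atTop := by
  choose F hP hF using fun n : ℕ => h (1 / ((n : ℝ) + 1)) Nat.one_div_pos_of_nat
  refine ⟨F, hP, Metric.tendstoUniformly_iff.mpr fun δ hδ => ?_⟩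
  obtain ⟨N, hN⟩ := exists_nat_one_div_lt hδ
  filter_upwards [eventually_ge_atTop N] with n hn x
  calc dist (f x) (F n x) = dist (F n x) (f x) := dist_comm _ _
    _ ≤ 1 / ((n : ℝ) + 1) := hF n x
    _ ≤ 1 / ((N : ℝ) + 1) := by gcongr
    _ < δ := hN

theorem stmt_6 {X : Type*} [TopologicalSpace X] [T5Space X] (f : X → ℝ) :
    (∃ F : ℕ → X → ℝ, (∀ n, B1ss (F n)) ∧ TendstoUniformly F f atTop) ↔
      (∀ ε : ℝ, 0 < ε → ∀ x ∈ DEps f ε, ContinuousWithinAt f (DEps f ε) x) := by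
  constructor
  · rintro ⟨F, hF, hFf⟩ ε hε
    refine hFf.tendstoUniformlyOn.continuousOn (Eventually.frequently ?_)
    filter_upwards [Metric.tendstoUniformly_iff.mp hFf (ε / 4) (by positivity)] with n hn
    exact (hF n).continuousOn_of_subset (DEps_subset_setOf_not_continuousAt hε hn)
  · refine fun hf => exists_tendstoUniformly_of_forall_exists_dist_le fun δ hδ => ?_
    obtain ⟨g, hg, hgf⟩ := exists_B1ss_dist_le (ε := δ / 4) (by positivity) (hf _ (by positivity))
    exact ⟨g, hg, fun x => (hgf x).trans_eq (by ring)⟩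
end

section
/- Let X be a topological space, D ⊆ X closed, and f : X → ℝ. If sup_{x∈X} |f(x) − g(x)| < ε/2 for some g : X → ℝ, then D_f^ε ⊆ D_g, i.e., every point where the oscillation of f is ≥ ε is a discontinuity point of g. -/
open Topology ENNReal Filter Set

theorem stmt_10 {X : Type*} [TopologicalSpace X] (D : Set X) (hD : IsClosed D)
    (f g : X → ℝ) (ε : ℝ) (hε : 0 < ε)
    (h : (⨆ x : X, edist (f x) (g x)) < ENNReal.ofReal (ε / 2)) :
    DEps f ε ⊆ {x | ¬ ContinuousAt g x} := by
  intro x hx hg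
  set s : ℝ≥0∞ := ⨆ x : X, edist (f x) (g x) with hs_def
  have hsle : ∀ y, edist (f y) (g y) ≤ s := fun y => le_iSup (fun y => edist (f y) (g y)) y
  have hδpos : 0 < ENNReal.ofReal (ε / 2) - s := tsub_pos_of_lt h
  have hev : ∀ᶠ ξ in 𝓝 x, edist (g ξ) (g x) < ENNReal.ofReal (ε / 2) - s :=
    EMetric.tendsto_nhds.mp hg _ hδpos
  have h1 : oscAt f x ≤ ⨆ ξ ∈ {ξ | edist (g ξ) (g x) < ENNReal.ofReal (ε / 2) - s},
      edist (f x) (f ξ) := biInf_le _ hev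
  have h2 : (⨆ ξ ∈ {ξ | edist (g ξ) (g x) < ENNReal.ofReal (ε / 2) - s},
      edist (f x) (f ξ)) ≤ s + ENNReal.ofReal (ε / 2) := by
    refine iSup₂_le fun ξ hξ => ?_
    have hξ' : edist (g ξ) (g x) < ENNReal.ofReal (ε / 2) - s := hξ
    calc edist (f x) (f ξ) ≤ edist (f x) (g x) + edist (g x) (g ξ) + edist (g ξ) (f ξ) :=
          edist_triangle4 _ _ _ _
      _ ≤ s + (ENNReal.ofReal (ε / 2) - s) + s := by
          refine add_le_add (add_le_add (hsle x) ?_) ?_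
          · rw [edist_comm]; exact hξ'.le
          · rw [edist_comm]; exact hsle ξ
      _ = s + (ENNReal.ofReal (ε / 2) - s + s) := by ring
      _ = s + ENNReal.ofReal (ε / 2) := by rw [tsub_add_cancel_of_le h.le]
  have h3 : s + ENNReal.ofReal (ε / 2) < ENNReal.ofReal ε := by
    have : ENNReal.ofReal ε = ENNReal.ofReal (ε / 2) + ENNReal.ofReal (ε / 2) := by
      rw [← ENNReal.ofReal_add (by linarith) (by linarith)]; ring_nf
    rw [this]
    exact ENNReal.add_lt_add_right ENNReal.ofReal_ne_top h
  exact absurd (hx.trans (h1.trans h2)) (not_le.mpr h3)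
end

section
/- Let X be a T₅ topological space and n ∈ ℕ, n ≥ 1. If f : X → ℝ satisfies D_f^{(n+1)*ε} = ∅ for every ε > 0 (i.e., f ∈ u𝒮_n(X)), then there exists a sequence (f_m) of functions in 𝒮_n(X) converging uniformly to f, where 𝒮_n(X) is the class of functions whose (n+1)-st iterated closed discontinuity set is empty. -/
open Topology ENNReal Filter Set

/-!
Fix `ε > 0` and let `E k` be the `k`-th iterated set of points where the diameter oscillation
of `f` is at least `2ε`. These sets are closed and decreasing, and `E (n + 1) = ∅` because
`E k ⊆ D_f^{k*ε}`. On each layer `E k \ E (k + 1)` the function `f` oscillates by less than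
`2ε`; the layer is a normal space since `X` is T₅, so a staircase of Urysohn functions gives a
function continuous on the layer and `8ε`-close to `f` there. Gluing these along the layers
yields `g` with `D_g^{k*0} ⊆ E k` for all `k`, hence `g ∈ 𝒮_n(X)`.
-/

section DiamOsc

variable {X Y : Type*} [TopologicalSpace X] [PseudoMetricSpace Y]

/-- Unlike `oscWithinAt`, this oscillation measures the diameter of `f '' O` rather than its
radius around `f x`; its superlevel sets inside a closed set are closed. -/
noncomputable def diamOscWithinAt (f : X → Y) (D : Set X) (x : X) : ℝ≥0∞ :=
  ⨅ O ∈ 𝓝[D] x, ⨆ ξ ∈ O, ⨆ ζ ∈ O, edist (f ξ) (f ζ)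

noncomputable def DDiamIter (f : X → Y) (ε : ℝ) : ℕ → Set X
  | 0 => univ
  | k + 1 => {x ∈ DDiamIter f ε k | ENNReal.ofReal ε ≤ diamOscWithinAt f (DDiamIter f ε k) x}

lemma diamOscWithinAt_mono (f : X → Y) {A B : Set X} (h : A ⊆ B) (x : X) :
    diamOscWithinAt f A x ≤ diamOscWithinAt f B x :=
  le_iInf₂ fun O hO => iInf₂_le O (nhdsWithin_mono x h hO)

lemma diamOscWithinAt_le_two_mul_oscWithinAt (f : X → Y) (D : Set X) (x : X) :
    diamOscWithinAt f D x ≤ 2 * oscWithinAt f D x := by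
  rw [oscWithinAt, ENNReal.mul_iInf_of_ne two_ne_zero ofNat_ne_top]
  refine le_iInf fun O => ?_
  rw [ENNReal.mul_iInf_of_ne two_ne_zero ofNat_ne_top]
  refine le_iInf fun hO => (iInf₂_le O hO).trans <| iSup₂_le fun ξ hξ => iSup₂_le fun ζ hζ => ?_
  have hle : ∀ η ∈ O, edist (f x) (f η) ≤ ⨆ η ∈ O, edist (f x) (f η) :=
    fun η hη => le_iSup₂_of_le η hη le_rfl
  calc edist (f ξ) (f ζ) ≤ edist (f x) (f ξ) + edist (f x) (f ζ) :=
        edist_comm (f x) (f ξ) ▸ edist_triangle _ _ _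
    _ ≤ 2 * ⨆ η ∈ O, edist (f x) (f η) := by
        rw [two_mul]; exact add_le_add (hle ξ hξ) (hle ζ hζ)

lemma isClosed_setOf_le_diamOscWithinAt (f : X → Y) {D : Set X} (hD : IsClosed D)
    (c : ℝ≥0∞) : IsClosed {x ∈ D | c ≤ diamOscWithinAt f D x} := by
  rw [← closure_subset_iff_isClosed]
  intro x hx
  refine ⟨hD.closure_subset (closure_mono (sep_subset _ _) hx), le_iInf₂ fun O hO => ?_⟩
  obtain ⟨U, hUopen, hxU, hUD⟩ := mem_nhdsWithin.mp hO
  obtain ⟨y, hyU, -, hyc⟩ := mem_closure_iff.mp hx U hUopen hxU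
  have hy : diamOscWithinAt f D y ≤ ⨆ ξ ∈ D ∩ U, ⨆ ζ ∈ D ∩ U, edist (f ξ) (f ζ) :=
    iInf₂_le _ (inter_mem_nhdsWithin D (hUopen.mem_nhds hyU))
  exact hyc.trans <| hy.trans <| iSup₂_le fun ξ hξ => iSup₂_le fun ζ hζ =>
    le_iSup₂_of_le ξ (hUD ⟨hξ.2, hξ.1⟩) (le_iSup₂_of_le ζ (hUD ⟨hζ.2, hζ.1⟩) le_rfl)

lemma isClosed_DDiamIter (f : X → Y) (ε : ℝ) : ∀ k, IsClosed (DDiamIter f ε k)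
  | 0 => isClosed_univ
  | k + 1 => isClosed_setOf_le_diamOscWithinAt f (isClosed_DDiamIter f ε k) _

lemma DDiamIter_antitone (f : X → Y) (ε : ℝ) : Antitone (DDiamIter f ε) :=
  antitone_nat_of_succ_le fun _ _ hx => hx.1

lemma DDiamIter_two_mul_subset_DIter (f : X → ℝ) (ε : ℝ) :
    ∀ k, DDiamIter f (2 * ε) k ⊆ DIter f ε k
  | 0 => subset_rfl
  | k + 1 => by
    rintro x ⟨hxk, hx⟩
    have hsub := DDiamIter_two_mul_subset_DIter f ε k
    refine ⟨hsub hxk, ?_⟩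
    rw [ENNReal.ofReal_mul zero_le_two, ENNReal.ofReal_ofNat] at hx
    exact (ENNReal.mul_le_mul_iff_right two_ne_zero ofNat_ne_top).mp <|
      hx.trans <| (diamOscWithinAt_mono f hsub x).trans <|
        diamOscWithinAt_le_two_mul_oscWithinAt f _ x

lemma eventually_dist_lt_of_diamOscWithinAt_lt {f : X → Y} {D : Set X} {x : X} (hx : x ∈ D)
    {ε : ℝ} (h : diamOscWithinAt f D x < ENNReal.ofReal ε) :
    ∀ᶠ ξ in 𝓝[D] x, dist (f ξ) (f x) < ε := by
  obtain ⟨O, hO⟩ := iInf_lt_iff.mp h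
  obtain ⟨hOx, hlt⟩ := iInf_lt_iff.mp hO
  filter_upwards [hOx] with ξ hξ
  refine edist_lt_ofReal.mp <| lt_of_le_of_lt ?_ hlt
  exact le_iSup₂_of_le ξ hξ (le_iSup₂_of_le x (mem_of_mem_nhdsWithin hx hOx) le_rfl)

end DiamOsc

section NormalApprox

variable {S : Type*} [TopologicalSpace S]

lemma disjoint_closure_setOf_le_setOf_ge {F : S → ℝ} {ε : ℝ}
    (h : ∀ s, ∀ᶠ t in 𝓝 s, dist (F t) (F s) < ε) {a b : ℝ} (hab : a + 2 * ε ≤ b) :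
    Disjoint (closure {s | F s ≤ a}) (closure {s | b ≤ F s}) := by
  refine Set.disjoint_left.mpr fun x hxa hxb => ?_
  obtain ⟨s, hs, hsa⟩ := mem_closure_iff_nhds.mp hxa _ (h x)
  obtain ⟨t, ht, htb⟩ := mem_closure_iff_nhds.mp hxb _ (h x)
  rw [mem_ofPred_eq, Real.dist_eq, abs_lt] at hs ht
  rw [mem_ofPred_eq] at hsa htb
  linarith

variable [NormalSpace S]

/-- A staircase of Urysohn functions: the `j`-th step rises by `2ε` between the closures of
`{F ≤ 2εj}` and `{2ε(j+1) ≤ F}`, which are disjoint since `F` oscillates by less than `ε`. -/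
lemma exists_continuous_dist_le_of_nonneg {F : S → ℝ} (hF : ∀ s, 0 ≤ F s) {ε : ℝ}
    (hε : 0 < ε) (h : ∀ s, ∀ᶠ t in 𝓝 s, dist (F t) (F s) < ε) :
    ∃ Φ : S → ℝ, Continuous Φ ∧ ∀ s, dist (Φ s) (F s) ≤ 2 * ε := by
  set δ := 2 * ε with hδ
  have hδ0 : 0 < δ := by positivity
  choose u hu0 hu1 huI using fun j : ℕ =>
    exists_continuous_zero_one_of_isClosed isClosed_closure isClosed_closure
      (disjoint_closure_setOf_le_setOf_ge h (a := j * δ) (b := (j + 1) * δ) (by linarith))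
  have hsupp : ∀ j t, δ * u j t ≠ 0 → j * δ < F t := fun j t ht => by
    by_contra! hle
    exact ht (by rw [hu0 j (subset_closure hle), Pi.zero_apply, mul_zero])
  refine ⟨fun s => ∑ᶠ j : ℕ, δ * u j s, ?_, fun s => ?_⟩
  · refine continuous_finsum (fun j => continuous_const.mul (u j).continuous) fun s => ?_
    refine ⟨_, h s, (finite_Iio ⌈(F s + ε) / δ⌉₊).subset ?_⟩
    rintro j ⟨t, htj, hts⟩
    rw [mem_ofPred_eq, Real.dist_eq, abs_lt] at hts
    rw [mem_Iio, Nat.lt_ceil, lt_div_iff₀ hδ0]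
    linarith [hsupp j t htj]
  · -- Only the step `p = ⌊F s / δ⌋` can be partly raised at `s`: earlier steps are full and
    -- later ones vanish.
    set p := ⌊F s / δ⌋₊
    have hp : p * δ ≤ F s ∧ F s < (p + 1) * δ := by
      rw [← le_div_iff₀ hδ0, ← div_lt_iff₀ hδ0]
      exact ⟨Nat.floor_le (div_nonneg (hF s) hδ0.le), Nat.lt_floor_add_one _⟩
    have hlow : ∀ j ∈ Finset.range p, δ * u j s = δ := fun j hj => by
      have hjp : (j : ℝ) + 1 ≤ p := by exact_mod_cast Finset.mem_range.mp hj
      rw [hu1 j (subset_closure (by nlinarith [hp.1] : (j + 1) * δ ≤ F s)), Pi.one_apply,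
        mul_one]
    have hhigh : Function.support (fun j => δ * u j s) ⊆ Finset.range (p + 1) := fun j hj => by
      have hjs := hsupp j s hj
      have : (j : ℝ) < p + 1 := (mul_lt_mul_iff_of_pos_right hδ0).mp (by linarith [hp.2])
      exact Finset.mem_coe.mpr (Finset.mem_range.mpr (by exact_mod_cast this))
    beta_reduce
    rw [finsum_eq_sum_of_support_subset _ hhigh, Finset.sum_range_succ, Finset.sum_congr rfl hlow,
      Finset.sum_const, Finset.card_range, nsmul_eq_mul, Real.dist_eq, abs_le]
    have hup := huI p s
    constructor <;> nlinarith [hup.1, hup.2]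

lemma exists_continuous_dist_le_s11 {F : S → ℝ} {ε : ℝ} (hε : 0 < ε)
    (h : ∀ s, ∀ᶠ t in 𝓝 s, dist (F t) (F s) < ε) :
    ∃ Φ : S → ℝ, Continuous Φ ∧ ∀ s, dist (Φ s) (F s) ≤ 4 * ε := by
  have hpos : ∀ s, ∀ᶠ t in 𝓝 s, dist (max (F t) 0) (max (F s) 0) < ε := fun s =>
    (h s).mono fun t ht => (abs_max_sub_max_le_abs _ _ _).trans_lt ht
  have hneg : ∀ s, ∀ᶠ t in 𝓝 s, dist (max (-F t) 0) (max (-F s) 0) < ε := fun s =>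
    (h s).mono fun t ht =>
      (abs_max_sub_max_le_abs _ _ _).trans_lt (by rwa [← Real.dist_eq, dist_neg_neg])
  obtain ⟨Φ₁, hΦ₁, hd₁⟩ := exists_continuous_dist_le_of_nonneg (fun _ => le_max_right _ _) hε hpos
  obtain ⟨Φ₂, hΦ₂, hd₂⟩ := exists_continuous_dist_le_of_nonneg (fun _ => le_max_right _ _) hε hneg
  refine ⟨fun s => Φ₁ s - Φ₂ s, hΦ₁.sub hΦ₂, fun s => ?_⟩
  calc dist (Φ₁ s - Φ₂ s) (F s) = dist (Φ₁ s - Φ₂ s) (max (F s) 0 - max (-F s) 0) := by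
        rw [max_zero_sub_max_neg_zero_eq_self]
    _ ≤ dist (Φ₁ s) (max (F s) 0) + dist (Φ₂ s) (max (-F s) 0) := dist_sub_sub_le _ _ _ _
    _ ≤ 4 * ε := by linarith [hd₁ s, hd₂ s]

end NormalApprox

lemma exists_continuousOn_dist_le {X : Type*} [TopologicalSpace X] [T5Space X] {V : Set X}
    {f : X → ℝ} {ε : ℝ} (hε : 0 < ε) (h : ∀ x ∈ V, ∀ᶠ ξ in 𝓝[V] x, dist (f ξ) (f x) < ε) :
    ∃ ψ : X → ℝ, ContinuousOn ψ V ∧ ∀ x ∈ V, dist (ψ x) (f x) ≤ 4 * ε := by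
  classical
  obtain ⟨Φ, hΦ, hd⟩ := exists_continuous_dist_le_s11 (S := V) (F := fun s => f s) hε
    fun s => by simpa only [nhdsWithin_eq_map_subtype_coe s.2, eventually_map] using h s s.2
  refine ⟨fun x => if hx : x ∈ V then Φ ⟨x, hx⟩ else 0, ?_,
    fun x hx => by simpa [hx] using hd ⟨x, hx⟩⟩
  rw [continuousOn_iff_continuous_domRestrict]
  convert hΦ using 1
  ext s
  simp [s.2]

section Layers

variable {X : Type*} {E : ℕ → Set X}

lemma exists_mem_diff_succ (h0 : E 0 = univ) {m : ℕ} (hm : E m = ∅) (x : X) :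
    ∃ k, x ∈ E k \ E (k + 1) := by
  classical
  have hex : ∃ k, x ∉ E k := ⟨m, hm ▸ notMem_empty x⟩
  obtain ⟨k, hk⟩ : ∃ k, Nat.find hex = k + 1 :=
    Nat.exists_eq_add_one_of_ne_zero fun h => Nat.find_spec hex (h ▸ h0 ▸ mem_univ x)
  exact ⟨k, not_not.mp (Nat.find_min hex (hk ▸ k.lt_add_one)), hk ▸ Nat.find_spec hex⟩

lemma Antitone.eq_of_mem_diff_succ (hE : Antitone E) {x : X} {j k : ℕ}
    (hj : x ∈ E j \ E (j + 1)) (hk : x ∈ E k \ E (k + 1)) : j = k := by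
  by_contra hne
  rcases Nat.lt_or_gt_of_ne hne with h | h
  · exact hj.2 (hE h hk.1)
  · exact hk.2 (hE h hj.1)

variable [TopologicalSpace X]

/-- `E (k + 1)` is closed, so near a point of the layer `E k \ E (k + 1)` the set `E k` meets no
other layer. -/
lemma continuousWithinAt_layerwise {Y : Type*} [TopologicalSpace Y] (hE : Antitone E)
    (hcl : ∀ k, IsClosed (E k)) {K : X → ℕ} (hK : ∀ x, x ∈ E (K x) \ E (K x + 1))
    {ψ : ℕ → X → Y} {k : ℕ} {x : X} (hx : x ∈ E k \ E (k + 1))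
    (hψ : ContinuousWithinAt (ψ k) (E k \ E (k + 1)) x) :
    ContinuousWithinAt (fun y => ψ (K y) y) (E k) x := by
  have hlayer : ∀ y ∈ E k \ E (k + 1), ψ (K y) y = ψ k y := fun y hy => by
    rw [hE.eq_of_mem_diff_succ (hK y) hy]
  rw [← continuousWithinAt_inter ((hcl (k + 1)).isOpen_compl.mem_nhds hx.2)]
  exact hψ.congr hlayer (hlayer x hx)

lemma DIter0_subset_of_continuousWithinAt (hcl : ∀ k, IsClosed (E k)) (h0 : E 0 = univ)
    {g : X → ℝ} (hg : ∀ k, ∀ x ∈ E k \ E (k + 1), ContinuousWithinAt g (E k) x) :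
    ∀ k, DIter0 g k ⊆ E k
  | 0 => h0.symm ▸ subset_univ _
  | k + 1 => by
    have ih := DIter0_subset_of_continuousWithinAt hcl h0 hg k
    refine (hcl (k + 1)).closure_subset_iff.mpr fun x ⟨hxk, hdisc⟩ => ?_
    by_contra hx
    exact hdisc ((hg k x ⟨ih hxk, hx⟩).mono ih)

end Layers

lemma exists_SClass_dist_le {X : Type*} [TopologicalSpace X] [T5Space X] {n : ℕ}
    {f : X → ℝ} (hf : uS n f) {ε : ℝ} (hε : 0 < ε) :
    ∃ g : X → ℝ, SClass n g ∧ ∀ x, dist (g x) (f x) ≤ 8 * ε := by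
  set E := DDiamIter f (2 * ε)
  have hcl : ∀ k, IsClosed (E k) := isClosed_DDiamIter f _
  have hE : Antitone E := DDiamIter_antitone f _
  have hempty : E (n + 1) = ∅ :=
    subset_empty_iff.mp (hf ε hε ▸ DDiamIter_two_mul_subset_DIter f ε (n + 1))
  have hosc : ∀ k, ∀ x ∈ E k \ E (k + 1), ∀ᶠ ξ in 𝓝[E k \ E (k + 1)] x,
      dist (f ξ) (f x) < 2 * ε := fun k x hx =>
    nhdsWithin_mono x sdiff_subset <| eventually_dist_lt_of_diamOscWithinAt_lt hx.1 <|
      not_le.mp fun hle => hx.2 ⟨hx.1, hle⟩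
  choose ψ hψ hψf using fun k => exists_continuousOn_dist_le (by positivity) (hosc k)
  choose K hK using exists_mem_diff_succ (E := E) rfl hempty
  refine ⟨fun x => ψ (K x) x, ?_, fun x => (hψf _ x (hK x)).trans (by linarith)⟩
  refine subset_empty_iff.mp (hempty ▸ DIter0_subset_of_continuousWithinAt hcl rfl ?_ (n + 1))
  exact fun k x hx => continuousWithinAt_layerwise hE hcl hK hx (hψ k x hx)

lemma exists_tendstoUniformly_of_forall_dist_le {X Y : Type*} [PseudoMetricSpace Y]
    {P : (X → Y) → Prop} {f : X → Y} (h : ∀ ε > 0, ∃ g, P g ∧ ∀ x, dist (g x) (f x) ≤ ε) :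
    ∃ F : ℕ → X → Y, (∀ m, P (F m)) ∧ TendstoUniformly F f atTop := by
  choose F hF hdist using fun m : ℕ => h (1 / (m + 1)) Nat.one_div_pos_of_nat
  refine ⟨F, hF, Metric.tendstoUniformly_iff.mpr fun δ hδ => ?_⟩
  filter_upwards [(tendsto_one_div_add_atTop_nhds_zero_nat).eventually_lt_const hδ] with m hm x
  rw [dist_comm]
  exact (hdist m x).trans_lt hm

theorem stmt_11_general {X : Type*} [TopologicalSpace X] [T5Space X] (n : ℕ)
    (f : X → ℝ) (hf : uS n f) :
    ∃ F : ℕ → X → ℝ, (∀ m, SClass n (F m)) ∧ TendstoUniformly F f atTop := by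
  refine exists_tendstoUniformly_of_forall_dist_le fun ε hε => ?_
  obtain ⟨g, hg, hdist⟩ := exists_SClass_dist_le hf (by positivity : 0 < ε / 8)
  exact ⟨g, hg, fun x => (hdist x).trans_eq (by ring)⟩

theorem stmt_11 {X : Type*} [TopologicalSpace X] [T5Space X] (n : ℕ) (hn : 1 ≤ n)
    (f : X → ℝ) (hf : uS n f) :
    ∃ F : ℕ → X → ℝ, (∀ m, SClass n (F m)) ∧ TendstoUniformly F f atTop :=
  stmt_11_general n f hf
end

section
/- Let X be a T₅ topological space, n, m ∈ ℕ with n, m ≥ 1. If f ∈ u𝒮_n(X) and g ∈ u𝒮_m(X), then f + g ∈ u𝒮_{n+m}(X). -/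
/-!
If `x` lies in the `(k+1)`-st `ε`-oscillation set of `f + g`, then `f` or `g` oscillates by at
least `ε / 2` at `x` on the `k`-th set of `f + g`. Inductively, that set is covered by the finitely
many sets `D_f^{i*δ} ∩ D_g^{j*δ}` with `i + j = k`, so one of them carries this oscillation, and `x`
lies in its closure. Passing to the closure only halves the oscillation threshold, so `x` lies in
`D_f^{i*δ/2} ∩ D_g^{j*δ/2}` and moves up one level in `f` or in `g`. Hence every point of
`D_{f+g}^{(n+m+1)*ε}` lies in `D_f^{(n+1)*δ}` or in `D_g^{(m+1)*δ}` for `δ = ε / 2^(n+m+1)`.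
-/

open Topology ENNReal Filter Set

-- Under `open Set`, `Finset.antidiagonal` resolves to the `Set.IsPWO` construction.
open Finset.HasAntidiagonal (antidiagonal)

lemma ENNReal.ofReal_half_le_or_of_le_add {ε : ℝ} {a b : ℝ≥0∞} (h : ENNReal.ofReal ε ≤ a + b) :
    ENNReal.ofReal (ε / 2) ≤ a ∨ ENNReal.ofReal (ε / 2) ≤ b := by
  rw [← le_max_iff, ENNReal.ofReal_div_of_pos two_pos, ENNReal.ofReal_ofNat]
  refine ENNReal.div_le_of_le_mul (h.trans ?_)
  rw [mul_two]
  exact add_le_add (le_max_left a b) (le_max_right a b)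

section Oscillation

variable {X Y : Type*} [TopologicalSpace X] [PseudoMetricSpace Y] {f : X → Y} {x : X}

lemma oscWithinAt_mono {D D' : Set X} (h : D ⊆ D') : oscWithinAt f D x ≤ oscWithinAt f D' x :=
  biInf_mono fun _ hO => nhdsWithin_mono x h hO

lemma oscWithinAt_eq_zero_of_nhdsWithin_eq_bot {D : Set X} (h : 𝓝[D] x = ⊥) :
    oscWithinAt f D x = 0 :=
  nonpos_iff_eq_zero.mp <| (iInf₂_le ∅ (by simp [h])).trans (by simp)

@[simp]
lemma oscWithinAt_empty : oscWithinAt f ∅ x = 0 :=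
  oscWithinAt_eq_zero_of_nhdsWithin_eq_bot (nhdsWithin_empty x)

lemma oscWithinAt_union (A B : Set X) :
    oscWithinAt f (A ∪ B) x = max (oscWithinAt f A x) (oscWithinAt f B x) := by
  refine le_antisymm (le_of_forall_gt fun c hc => ?_)
    (max_le (oscWithinAt_mono subset_union_left) (oscWithinAt_mono subset_union_right))
  obtain ⟨hA, hB⟩ := max_lt_iff.mp hc
  simp only [oscWithinAt, iInf_lt_iff] at hA hB
  obtain ⟨O₁, hO₁, h₁⟩ := hA
  obtain ⟨O₂, hO₂, h₂⟩ := hB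
  refine (iInf₂_le (O₁ ∪ O₂) ?_).trans_lt ?_
  · rw [nhdsWithin_union]
    exact union_mem_sup hO₁ hO₂
  · rw [iSup_union]
    exact max_lt h₁ h₂

lemma oscWithinAt_biUnion {ι : Type*} (s : Finset ι) (S : ι → Set X) :
    oscWithinAt f (⋃ i ∈ s, S i) x = s.sup fun i => oscWithinAt f (S i) x := by
  classical
  induction s using Finset.induction_on with
  | empty => simp
  | insert i s _ ih => rw [Finset.set_biUnion_insert, oscWithinAt_union, ih, Finset.sup_insert]

lemma mem_closure_of_oscWithinAt_pos {D : Set X} (h : 0 < oscWithinAt f D x) :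
    x ∈ closure D := by
  by_contra hx
  rw [mem_closure_iff_nhdsWithin_neBot, not_neBot] at hx
  exact h.ne' (oscWithinAt_eq_zero_of_nhdsWithin_eq_bot hx)

/-- Near a point `y` of the set with `ω ≥ ε`, the values of `f` spread by at least `ε`, and each
lies within `s` of `f x`, where `s` bounds the spread around `x`; hence `ε ≤ 2 s`. -/
lemma half_le_oscWithinAt_of_mem_closure {D : Set X} {ε : ℝ}
    (hx : x ∈ closure {y ∈ D | ENNReal.ofReal ε ≤ oscWithinAt f D y}) :
    ENNReal.ofReal (ε / 2) ≤ oscWithinAt f D x := by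
  refine le_iInf₂ fun O hO => ?_
  obtain ⟨U, hU, hxU, hUO⟩ := mem_nhdsWithin.mp hO
  obtain ⟨y, hyU, hyD, hy⟩ := mem_closure_iff.mp hx U hU hxU
  set s := ⨆ ξ ∈ O, edist (f x) (f ξ)
  have hs : ∀ ξ ∈ D ∩ U, edist (f x) (f ξ) ≤ s := fun ξ hξ =>
    le_iSup₂ (f := fun ξ _ => edist (f x) (f ξ)) ξ (hUO ⟨hξ.2, hξ.1⟩)
  have hε : ENNReal.ofReal ε ≤ s + s := by
    refine hy.trans <| (iInf₂_le (D ∩ U) (inter_mem_nhdsWithin D (hU.mem_nhds hyU))).trans <|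
      iSup₂_le fun ξ hξ => ?_
    calc edist (f y) (f ξ) ≤ edist (f x) (f y) + edist (f x) (f ξ) := edist_triangle_left _ _ _
      _ ≤ s + s := add_le_add (hs y ⟨hyD, hyU⟩) (hs ξ hξ)
  simpa using ENNReal.ofReal_half_le_or_of_le_add hε

end Oscillation

lemma oscWithinAt_add_le {X E : Type*} [TopologicalSpace X] [SeminormedAddCommGroup E]
    (f g : X → E) (D : Set X) (x : X) :
    oscWithinAt (f + g) D x ≤ oscWithinAt f D x + oscWithinAt g D x :=
  ENNReal.le_iInf_add_iInf fun O₁ O₂ => ENNReal.le_iInf_add_iInf fun h₁ h₂ =>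
    (iInf₂_le (O₁ ∩ O₂) (inter_mem h₁ h₂)).trans <| iSup₂_le fun ξ hξ =>
      (edist_add_add_le _ _ _ _).trans <|
        add_le_add (le_iSup₂ (f := fun ξ _ => edist (f x) (f ξ)) ξ hξ.1)
          (le_iSup₂ (f := fun ξ _ => edist (g x) (g ξ)) ξ hξ.2)

section DIter

variable {X : Type*} [TopologicalSpace X] {f g : X → ℝ}

lemma DIter_succ_subset (ε : ℝ) (k : ℕ) : DIter f ε (k + 1) ⊆ DIter f ε k :=
  fun _ hx => hx.1

lemma DIter_antitone (ε : ℝ) : Antitone (DIter f ε) :=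
  antitone_nat_of_succ_le (DIter_succ_subset ε)

lemma DIter_subset_DIter_of_le {δ ε : ℝ} (h : δ ≤ ε) (k : ℕ) : DIter f ε k ⊆ DIter f δ k := by
  induction k with
  | zero => exact subset_rfl
  | succ k ih =>
    rintro x ⟨hxk, hx⟩
    exact ⟨ih hxk, (ENNReal.ofReal_le_ofReal h).trans (hx.trans (oscWithinAt_mono ih))⟩

lemma closure_DIter_subset {ε : ℝ} (hε : 0 ≤ ε) (k : ℕ) :
    closure (DIter f ε k) ⊆ DIter f (ε / 2) k := by
  induction k with
  | zero => exact subset_univ _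
  | succ k ih =>
    intro x hx
    refine ⟨ih (closure_mono (DIter_succ_subset ε k) hx), ?_⟩
    exact (half_le_oscWithinAt_of_mem_closure hx).trans
      (oscWithinAt_mono (DIter_subset_DIter_of_le (half_le_self hε) k))

lemma mem_DIter_succ_half {δ : ℝ} (hδ : 0 < δ) {T : Set X} {i : ℕ} {x : X}
    (hT : T ⊆ DIter f δ i) (hx : ENNReal.ofReal (δ / 2) ≤ oscWithinAt f T x) :
    x ∈ DIter f (δ / 2) (i + 1) := by
  have hxT : x ∈ closure T :=
    mem_closure_of_oscWithinAt_pos ((ofReal_pos.2 (half_pos hδ)).trans_le hx)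
  refine ⟨closure_DIter_subset hδ.le i (closure_mono hT hxT), hx.trans (oscWithinAt_mono ?_)⟩
  exact hT.trans (DIter_subset_DIter_of_le (half_le_self hδ.le) i)

lemma DIter_add_succ_subset {ε δ : ℝ} (hδ : 0 < δ) (hδε : δ ≤ ε) {k : ℕ}
    (hk : DIter (f + g) ε k ⊆ ⋃ p ∈ antidiagonal k, DIter f δ p.1 ∩ DIter g δ p.2) :
    DIter (f + g) ε (k + 1) ⊆
      ⋃ p ∈ antidiagonal (k + 1 : ℕ), DIter f (δ / 2) p.1 ∩ DIter g (δ / 2) p.2 := by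
  rintro x ⟨-, hx⟩
  have hpos : ⊥ < ENNReal.ofReal (ε / 2) := ofReal_pos.2 (by linarith)
  have hδε2 : ENNReal.ofReal (δ / 2) ≤ ENNReal.ofReal (ε / 2) := ofReal_le_ofReal (by linarith)
  have hclosure : ∀ p : ℕ × ℕ, x ∈ closure (DIter f δ p.1 ∩ DIter g δ p.2) →
      x ∈ DIter f (δ / 2) p.1 ∩ DIter g (δ / 2) p.2 := fun p hp =>
    ⟨closure_DIter_subset hδ.le _ (closure_mono inter_subset_left hp),
      closure_DIter_subset hδ.le _ (closure_mono inter_subset_right hp)⟩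
  rcases ENNReal.ofReal_half_le_or_of_le_add (hx.trans (oscWithinAt_add_le f g _ x)) with hf | hg
  · obtain ⟨p, hp, hfp⟩ := (Finset.le_sup_iff hpos).1 <|
      (hf.trans (oscWithinAt_mono hk)).trans_eq (oscWithinAt_biUnion _ _)
    have hxp := hclosure p (mem_closure_of_oscWithinAt_pos (hpos.trans_le hfp))
    refine mem_biUnion (x := (p.1 + 1, p.2)) ?_
      ⟨mem_DIter_succ_half hδ inter_subset_left (hδε2.trans hfp), hxp.2⟩
    simp only [Finset.mem_coe, Finset.HasAntidiagonal.mem_antidiagonal] at hp ⊢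
    omega
  · obtain ⟨p, hp, hgp⟩ := (Finset.le_sup_iff hpos).1 <|
      (hg.trans (oscWithinAt_mono hk)).trans_eq (oscWithinAt_biUnion _ _)
    have hxp := hclosure p (mem_closure_of_oscWithinAt_pos (hpos.trans_le hgp))
    refine mem_biUnion (x := (p.1, p.2 + 1)) ?_
      ⟨hxp.1, mem_DIter_succ_half hδ inter_subset_right (hδε2.trans hgp)⟩
    simp only [Finset.mem_coe, Finset.HasAntidiagonal.mem_antidiagonal] at hp ⊢
    omega

lemma DIter_add_subset {ε : ℝ} (hε : 0 < ε) (k : ℕ) :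
    DIter (f + g) ε k ⊆
      ⋃ p ∈ antidiagonal k, DIter f (ε / 2 ^ k) p.1 ∩ DIter g (ε / 2 ^ k) p.2 := by
  induction k with
  | zero => exact fun _ _ => mem_biUnion (x := (0, 0)) (by simp) ⟨trivial, trivial⟩
  | succ k ih =>
    rw [pow_succ, ← div_div]
    exact DIter_add_succ_subset (by positivity) (div_le_self hε.le (one_le_pow₀ one_le_two)) ih

end DIter

theorem stmt_12_general {X : Type*} [TopologicalSpace X] (n m : ℕ)
    (f g : X → ℝ) (hf : uS n f) (hg : uS m g) :
    uS (n + m) (f + g) := by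
  intro ε hε
  have hδ : 0 < ε / 2 ^ (n + m + 1) := by positivity
  refine eq_empty_of_subset_empty fun x hx => ?_
  obtain ⟨p, hp, hxf, hxg⟩ := mem_iUnion₂.1 (DIter_add_subset hε (n + m + 1) hx)
  rw [Finset.HasAntidiagonal.mem_antidiagonal] at hp
  rcases le_or_gt (n + 1) p.1 with h | h
  · simpa [hf _ hδ] using DIter_antitone _ h hxf
  · simpa [hg _ hδ] using DIter_antitone _ (show m + 1 ≤ p.2 by omega) hxg

theorem stmt_12 {X : Type*} [TopologicalSpace X] [T5Space X] (n m : ℕ)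
    (hn : 1 ≤ n) (hm : 1 ≤ m) (f g : X → ℝ) (hf : uS n f) (hg : uS m g) :
    uS (n + m) (f + g) :=
  stmt_12_general n m f g hf hg
end

section
/- The real line ℝ with its natural topology has property (T): for every closed set Y ⊆ ℝ and every function f : Y → ℝ, there exists a continuous function g : ℝ \ Y → ℝ such that, defining h : ℝ → ℝ by h = f on Y and h = g on ℝ \ Y, the oscillation of h at every point x ∈ Y equals the oscillation of f (computed in the subspace Y) at x. -/
open Topology ENNReal Filter Set

open scoped Classical in
/-- Property (T): for every closed `Y` and every `f : Y → ℝ` there is a continuous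
`g` on the complement such that the glued function has, at each point of `Y`, the same
oscillation as `f` computed within `Y`. -/
def PropertyT (X : Type*) [TopologicalSpace X] : Prop :=
  ∀ Y : Set X, IsClosed Y → ∀ f : X → ℝ, ∃ g : X → ℝ, ContinuousOn g Yᶜ ∧
    ∀ x ∈ Y, oscAt (Y.piecewise f g) x = oscWithinAt f Y x

/-
Define `g` on each bounded gap `(a, b)` of the closed set `Y` as the affine function joining
`f a` to `f b`, and on each unbounded gap as a constant. A point `ξ ∉ Y` close to `x ∈ Y` either
lies between two points of `Y` close to `x`, so that `g ξ` is a convex combination of values of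
`f` close to `f x`, or lies in a gap with endpoint `x`, along which `g` tends to `f x`. Hence the
glued function oscillates at `x` no more than `f` does within `Y`; the reverse inequality holds
for every extension of `f`. The left side of `x` reduces to the right one by `t ↦ -t`.
-/

section Oscillation

variable {X E : Type*} [TopologicalSpace X] [PseudoMetricSpace E] {f g : X → E} {D : Set X}
  {x : X}

theorem oscAt_eq_limsup (f : X → E) (x : X) :
    oscAt f x = limsup (fun ξ => edist (f x) (f ξ)) (𝓝 x) :=
  limsup_eq_iInf_iSup.symm

theorem oscWithinAt_eq_limsup (f : X → E) (D : Set X) (x : X) :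
    oscWithinAt f D x = limsup (fun ξ => edist (f x) (f ξ)) (𝓝[D] x) :=
  limsup_eq_iInf_iSup.symm

theorem oscWithinAt_le_oscAt : oscWithinAt f D x ≤ oscAt f x := by
  rw [oscWithinAt_eq_limsup, oscAt_eq_limsup]
  exact limsup_le_limsup_of_le nhdsWithin_le_nhds

theorem oscWithinAt_congr (h : EqOn f g D) (hx : x ∈ D) :
    oscWithinAt f D x = oscWithinAt g D x := by
  rw [oscWithinAt_eq_limsup, oscWithinAt_eq_limsup, h hx]
  exact limsup_congr (eventually_nhdsWithin_of_forall fun ξ hξ => by rw [h hξ])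

theorem eventually_edist_lt_of_oscWithinAt_lt {r : ℝ≥0∞} (hr : oscWithinAt f D x < r) :
    ∀ᶠ ξ in 𝓝[D] x, edist (f x) (f ξ) < r :=
  eventually_lt_of_limsup_lt (by rwa [← oscWithinAt_eq_limsup])

theorem oscAt_le_of_forall_eventually_edist_lt {c : ℝ≥0∞}
    (h : ∀ r, c < r → ∀ᶠ ξ in 𝓝 x, edist (f x) (f ξ) < r) : oscAt f x ≤ c := by
  refine le_of_forall_gt_imp_ge_of_dense fun r hr => ?_
  rw [oscAt_eq_limsup]
  exact limsup_le_of_le (h := (h r hr).mono fun _ => le_of_lt)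

end Oscillation

theorem IsClosed.exists_gap {α : Type*} [ConditionallyCompleteLinearOrder α] [TopologicalSpace α]
    [OrderTopology α] {Y : Set α} (hY : IsClosed Y) {y₁ y₂ t : α} (h₁ : y₁ ∈ Y) (h₂ : y₂ ∈ Y)
    (ht : t ∈ Icc y₁ y₂) (htY : t ∉ Y) :
    ∃ a ∈ Y, ∃ b ∈ Y, y₁ ≤ a ∧ t ∈ Ioo a b ∧ b ≤ y₂ ∧ Disjoint (Ioo a b) Y := by
  obtain ⟨a, ⟨haY, ha⟩, ha_max⟩ :=
    (isCompact_Icc.inter_left hY).exists_isGreatest ⟨y₁, h₁, le_rfl, ht.1⟩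
  obtain ⟨b, ⟨hbY, hb⟩, hb_min⟩ :=
    (isCompact_Icc.inter_left hY).exists_isLeast ⟨y₂, h₂, ht.2, le_rfl⟩
  refine ⟨a, haY, b, hbY, ha.1, ⟨ha.2.lt_of_ne ?_, hb.1.lt_of_ne ?_⟩, hb.2,
    disjoint_left.2 fun z hz hzY => ?_⟩
  · rintro rfl; exact htY haY
  · rintro rfl; exact htY hbY
  rcases le_total z t with hzt | htz
  · exact (ha_max ⟨hzY, ha.1.trans hz.1.le, hzt⟩).not_gt hz.1
  · exact (hb_min ⟨hzY, htz, hz.2.le.trans hb.2⟩).not_gt hz.2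

structure IsGapInterpolant (Y : Set ℝ) (f g : ℝ → ℝ) : Prop where
  eq_of_mem_Ioo {a b t : ℝ} : a ∈ Y → b ∈ Y → Disjoint (Ioo a b) Y → t ∈ Ioo a b →
    g t = f a + (t - a) / (b - a) * (f b - f a)
  eq_of_forall_le {a t : ℝ} : a ∈ Y → (∀ y ∈ Y, y ≤ a) → a < t → g t = f a
  eq_of_forall_ge {b t : ℝ} : b ∈ Y → (∀ y ∈ Y, b ≤ y) → t < b → g t = f b

open scoped Classical in
noncomputable def gapInterpolant (Y : Set ℝ) (f : ℝ → ℝ) (t : ℝ) : ℝ :=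
  let a := sSup (Y ∩ Iic t)
  let b := sInf (Y ∩ Ici t)
  if (Y ∩ Iic t).Nonempty then
    if (Y ∩ Ici t).Nonempty then f a + (t - a) / (b - a) * (f b - f a) else f a
  else f b

theorem isGapInterpolant_gapInterpolant (Y : Set ℝ) (f : ℝ → ℝ) :
    IsGapInterpolant Y f (gapInterpolant Y f) where
  eq_of_mem_Ioo {a b t} haY hbY hgap ht := by
    have ha : IsGreatest (Y ∩ Iic t) a := ⟨⟨haY, ht.1.le⟩, fun y ⟨hyY, hyt⟩ =>
      not_lt.1 fun hay => disjoint_left.1 hgap ⟨hay, hyt.trans_lt ht.2⟩ hyY⟩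
    have hb : IsLeast (Y ∩ Ici t) b := ⟨⟨hbY, ht.2.le⟩, fun y ⟨hyY, hty⟩ =>
      not_lt.1 fun hyb => disjoint_left.1 hgap ⟨ht.1.trans_le hty, hyb⟩ hyY⟩
    simp only [gapInterpolant, if_pos ha.nonempty, if_pos hb.nonempty, ha.csSup_eq, hb.csInf_eq]
  eq_of_forall_le {a t} haY ha hat := by
    have ha' : IsGreatest (Y ∩ Iic t) a := ⟨⟨haY, hat.le⟩, fun y hy => ha y hy.1⟩
    have hempty : ¬ (Y ∩ Ici t).Nonempty := fun ⟨y, hyY, hty⟩ =>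
      (hat.trans_le hty).not_ge (ha y hyY)
    simp only [gapInterpolant, if_pos ha'.nonempty, if_neg hempty, ha'.csSup_eq]
  eq_of_forall_ge {b t} hbY hb htb := by
    have hb' : IsLeast (Y ∩ Ici t) b := ⟨⟨hbY, htb.le⟩, fun y hy => hb y hy.1⟩
    have hempty : ¬ (Y ∩ Iic t).Nonempty := fun ⟨y, hyY, hyt⟩ =>
      (hyt.trans_lt htb).not_ge (hb y hyY)
    simp only [gapInterpolant, if_neg hempty, hb'.csInf_eq]

namespace IsGapInterpolant

variable {Y : Set ℝ} {f g : ℝ → ℝ}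

theorem neg (hg : IsGapInterpolant Y f g) :
    IsGapInterpolant (-Y) (fun t => f (-t)) (fun t => g (-t)) where
  eq_of_mem_Ioo {a b t} haY hbY hgap ht := by
    have hgap' : Disjoint (Ioo (-b) (-a)) Y := disjoint_left.2 fun y hy hyY =>
      disjoint_left.1 hgap ⟨lt_neg_of_lt_neg hy.2, neg_lt.1 hy.1⟩ (by simpa using hyY)
    rw [hg.eq_of_mem_Ioo hbY haY hgap' ⟨neg_lt_neg ht.2, neg_lt_neg ht.1⟩]
    have hab : b - a ≠ 0 := sub_ne_zero.2 (ht.1.trans ht.2).ne'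
    rw [show -a - -b = b - a by ring]
    field_simp
    ring
  eq_of_forall_le {a t} haY ha hat :=
    hg.eq_of_forall_ge haY (fun y hy => neg_le.1 (ha (-y) (by simpa using hy))) (neg_lt_neg hat)
  eq_of_forall_ge {b t} hbY hb htb :=
    hg.eq_of_forall_le hbY (fun y hy => le_neg.1 (hb (-y) (by simpa using hy))) (neg_lt_neg htb)

theorem continuousOn (hg : IsGapInterpolant Y f g) (hY : IsClosed Y) (hne : Y.Nonempty) :
    ContinuousOn g Yᶜ := by
  intro t (ht : t ∉ Y)
  refine ContinuousAt.continuousWithinAt ?_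
  by_cases hbelow : ∃ y ∈ Y, y ≤ t <;> by_cases habove : ∃ y ∈ Y, t ≤ y
  · obtain ⟨y₁, hy₁, h₁⟩ := hbelow
    obtain ⟨y₂, hy₂, h₂⟩ := habove
    obtain ⟨a, haY, b, hbY, -, hab, -, hgap⟩ := hY.exists_gap hy₁ hy₂ ⟨h₁, h₂⟩ ht
    have hφ : ContinuousAt (fun s => f a + (s - a) / (b - a) * (f b - f a)) t := by fun_prop
    exact hφ.congr (eventually_of_mem (isOpen_Ioo.mem_nhds hab) fun s hs =>
      (hg.eq_of_mem_Ioo haY hbY hgap hs).symm)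
  · push Not at habove
    have ha := hY.isGreatest_csSup hne ⟨t, fun y hy => (habove y hy).le⟩
    exact continuousAt_const.congr (eventually_of_mem (isOpen_Ioi.mem_nhds (habove _ ha.1))
      fun s hs => (hg.eq_of_forall_le ha.1 ha.2 hs).symm)
  · push Not at hbelow
    have hb := hY.isLeast_csInf hne ⟨t, fun y hy => (hbelow y hy).le⟩
    exact continuousAt_const.congr (eventually_of_mem (isOpen_Iio.mem_nhds (hbelow _ hb.1))
      fun s hs => (hg.eq_of_forall_ge hb.1 hb.2 hs).symm)
  · push Not at hbelow habove
    obtain ⟨y, hy⟩ := hne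
    exact ((hbelow y hy).not_ge (habove y hy).le).elim

theorem mem_of_mem_Icc (hg : IsGapInterpolant Y f g) (hY : IsClosed Y) {s : Set ℝ}
    (hs : Convex ℝ s) {y₁ y₂ t : ℝ} (h₁ : y₁ ∈ Y) (h₂ : y₂ ∈ Y)
    (hf : ∀ y ∈ Y, y ∈ Icc y₁ y₂ → f y ∈ s) (ht : t ∈ Icc y₁ y₂) (htY : t ∉ Y) : g t ∈ s := by
  obtain ⟨a, haY, b, hbY, hya, hab, hby, hgap⟩ := hY.exists_gap h₁ h₂ ht htY
  have hθ : (t - a) / (b - a) ∈ Icc (0 : ℝ) 1 :=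
    ⟨div_nonneg (by linarith [hab.1]) (by linarith [hab.1, hab.2]),
      div_le_one_of_le₀ (by linarith [hab.2]) (by linarith [hab.1, hab.2])⟩
  rw [hg.eq_of_mem_Ioo haY hbY hgap hab]
  simpa only [smul_eq_mul] using hs.add_smul_sub_mem
    (hf a haY ⟨hya, hab.1.le.trans (hab.2.le.trans hby)⟩)
    (hf b hbY ⟨hya.trans (hab.1.le.trans hab.2.le), hby⟩) hθ

theorem eventually_nhdsGE (hg : IsGapInterpolant Y f g) (hY : IsClosed Y) {x : ℝ} (hx : x ∈ Y)
    {s : Set ℝ} (hs : s ∈ 𝓝 (f x)) (hsc : Convex ℝ s) (hf : ∀ᶠ y in 𝓝[Y] x, f y ∈ s) :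
    ∀ᶠ ξ in 𝓝[≥] x, ξ ∉ Y → g ξ ∈ s := by
  obtain ⟨c, hxc, hc⟩ := mem_nhdsGE_iff_exists_Icc_subset.1
    ((eventually_nhdsWithin_iff.1 hf).filter_mono nhdsWithin_le_nhds)
  by_cases hnear : ∃ y ∈ Y, y ∈ Ioc x c
  · obtain ⟨y, hyY, hy⟩ := hnear
    filter_upwards [Ico_mem_nhdsGE hy.1] with ξ hξ hξY
    exact hg.mem_of_mem_Icc hY hsc hx hyY (fun z hzY hz => hc ⟨hz.1, hz.2.trans hy.2⟩ hzY)
      (Ico_subset_Icc_self hξ) hξY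
  simp only [not_exists, not_and, mem_Ioc, not_le] at hnear
  by_cases habove : ∃ y ∈ Y, x < y
  · -- `x` is the left endpoint of a bounded gap, on which `g` is affine with value `f x` at `x`
    obtain ⟨y, hyY, hxy⟩ := habove
    have hcY : c ∉ Y := fun hcY => (hnear c hcY hxc).false
    obtain ⟨a, haY, b, hbY, hxa, hab, -, hgap⟩ :=
      hY.exists_gap hx hyY ⟨hxc.le, (hnear y hyY hxy).le⟩ hcY
    obtain rfl : x = a := hxa.antisymm (le_of_not_gt fun hxa' => (hnear a haY hxa').not_gt hab.1)
    have hφ : ContinuousAt (fun t => f x + (t - x) / (b - x) * (f b - f x)) x := by fun_prop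
    have hφs := (hφ.mono_left (nhdsWithin_le_nhds (s := Ici x))).eventually_mem (by simpa using hs)
    filter_upwards [hφs, Ico_mem_nhdsGE (hab.1.trans hab.2)] with ξ hξs hξ hξY
    rwa [hg.eq_of_mem_Ioo hx hbY hgap ⟨hξ.1.lt_of_ne (ne_of_mem_of_not_mem hx hξY), hξ.2⟩]
  · push Not at habove
    filter_upwards [self_mem_nhdsWithin] with ξ hξ hξY
    rw [hg.eq_of_forall_le hx habove (hξ.lt_of_ne (ne_of_mem_of_not_mem hx hξY))]
    exact mem_of_mem_nhds hs

theorem eventually_nhds (hg : IsGapInterpolant Y f g) (hY : IsClosed Y) {x : ℝ} (hx : x ∈ Y)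
    {s : Set ℝ} (hs : s ∈ 𝓝 (f x)) (hsc : Convex ℝ s) (hf : ∀ᶠ y in 𝓝[Y] x, f y ∈ s) :
    ∀ᶠ ξ in 𝓝 x, ξ ∉ Y → g ξ ∈ s := by
  rw [← nhdsLE_sup_nhdsGE, eventually_sup]
  refine ⟨?_, hg.eventually_nhdsGE hY hx hs hsc hf⟩
  have hneg : Tendsto Neg.neg (𝓝[-Y] (-x)) (𝓝[Y] (- -x)) :=
    continuous_neg.continuousWithinAt.tendsto_nhdsWithin fun y hy => hy
  have hf' : ∀ᶠ y in 𝓝[-Y] (-x), f (-y) ∈ s := hneg.eventually (by rwa [neg_neg])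
  have := hg.neg.eventually_nhdsGE hY.neg (neg_mem_neg.2 hx) (by simpa using hs) hsc hf'
  filter_upwards [tendsto_neg_nhdsLE.eventually this] with ξ hξ hξY
  simpa using hξ (by simpa using hξY)

theorem oscAt_piecewise_le (hg : IsGapInterpolant Y f g) (hY : IsClosed Y)
    [DecidablePred (· ∈ Y)] {x : ℝ} (hx : x ∈ Y) :
    oscAt (Y.piecewise f g) x ≤ oscWithinAt f Y x := by
  refine oscAt_le_of_forall_eventually_edist_lt fun r hr => ?_
  have hf : ∀ᶠ y in 𝓝[Y] x, f y ∈ Metric.eball (f x) r :=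
    (eventually_edist_lt_of_oscWithinAt_lt hr).mono fun y hy => Metric.mem_eball'.2 hy
  filter_upwards [hg.eventually_nhds hY hx (Metric.eball_mem_nhds _ (pos_of_gt hr))
    (convex_eball _ _) hf, eventually_nhdsWithin_iff.1 hf] with ξ hgξ hfξ
  rw [piecewise_eq_of_mem _ _ _ hx, ← Metric.mem_eball']
  by_cases hξ : ξ ∈ Y
  · rw [piecewise_eq_of_mem _ _ _ hξ]; exact hfξ hξ
  · rw [piecewise_eq_of_notMem _ _ _ hξ]; exact hgξ hξ

end IsGapInterpolant

theorem stmt_14 : PropertyT ℝ := by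
  intro Y hY f
  classical
  rcases Y.eq_empty_or_nonempty with rfl | hne
  · exact ⟨0, continuousOn_const, fun x hx => hx.elim⟩
  have hg := isGapInterpolant_gapInterpolant Y f
  refine ⟨gapInterpolant Y f, hg.continuousOn hY hne, fun x hx => ?_⟩
  exact (hg.oscAt_piecewise_le hY hx).antisymm
    ((oscWithinAt_congr (piecewise_eqOn _ _ _).symm hx).trans_le oscWithinAt_le_oscAt)
end

section
/- Let X be a topological space, D ⊆ X closed, and suppose f : X → ℝ restricted to X \ D is continuous on X \ D and f restricted to D vanishes. Suppose moreover for every ε > 0 there is a closed set E ⊆ X \ D such that f vanishes on (D_f^{n*ε}) \ E, where D_f^{n*ε} denotes the n-fold iterated ε-oscillation set of f. Then the restriction of f to D_f^{n*ε} is continuous at every point of D_f^{n*ε} ∩ D. -/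
open Topology ENNReal Filter Set

theorem stmt_19 {X : Type*} [TopologicalSpace X] (D : Set X) (hD : IsClosed D)
    (f : X → ℝ) (n : ℕ) (hn : 1 ≤ n)
    (hcont : ContinuousOn f Dᶜ) (hzero : ∀ x ∈ D, f x = 0)
    (hE : ∀ ε : ℝ, 0 < ε → ∃ E : Set X, IsClosed E ∧ E ⊆ Dᶜ ∧
      ∀ x ∈ DIter f ε n \ E, f x = 0) :
    ∀ ε : ℝ, 0 < ε → ∀ x ∈ DIter f ε n ∩ D,
      ContinuousWithinAt f (DIter f ε n) x := by
  intro ε hε x hx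
  obtain ⟨E, hEc, hED, hEz⟩ := hE ε hε
  have hxE : x ∉ E := fun h => (hED h) hx.2
  have hx0 : f x = 0 := hzero x hx.2
  have hev : ∀ᶠ ξ in 𝓝[DIter f ε n] x, f ξ = 0 := by
    filter_upwards [mem_nhdsWithin_of_mem_nhds (hEc.isOpen_compl.mem_nhds hxE),
      self_mem_nhdsWithin] with ξ h1 h2
    exact hEz ξ ⟨h2, h1⟩
  rw [ContinuousWithinAt, hx0]
  exact Tendsto.congr' (by filter_upwards [hev] with ξ h using h.symm) tendsto_const_nhds
end
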